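/- Let ϱ : ℝ × [0,∞) → ℝ be a shrinkage rule with exponent ρ ∈ [1/2, ∞) (constants C₁, C₂, D > 0 with |x − ϱ(x,α)| ≤ C₁ min(|x|,α) for all α ≥ 0, x ∈ ℝ, and |ϱ(x,α)| ≤ C₂|x|(|x|/α)^ρ for α > 0, |x| ≤ Dα), and set q = 1/ρ ∈ (0,2]. Let {f_n}, {f̃_n} be a bi-frame for a separable Hilbert space H with synthesis operator F and dual analysis operator F̃*, let (α_n) be nonnegative weights, and suppose F̃* F is bounded on ℓ_q^{(α_n)} (there is M with ∑_n α_n |(F̃* F ω)_n|^q ≤ M ∑_n α_n |ω_n|^q for all ω). Then there exists C > 0 such that for all h ∈ H and all ω ∈ ℓ²(ℕ), K_q(h, ω̂) ≤ C · K_q(h, ω), where K_q(h, ω) = ‖h − Fω‖²_H + ∑_n α_n |ω_n|^q, v = F̃* h, and ω̂_n = ϱ(v_n, α_n |v_n|^{q−1}) (and ω̂_n = 0 when v_n = 0). -/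
import Mathlib

set_option maxHeartbeats 1600000

open scoped RealInnerProductSpace ENNReal

noncomputable section

/-- The weighted `ℓ_q` penalty `∑_n α_n |w_n|^q` of a (real) sequence `w`, valued in `ℝ≥0∞`,
with the convention `0^0 = 0`. -/
def wpen (α : ℕ → ℝ) (q : ℝ) (w : ℕ → ℝ) : ℝ≥0∞ :=
  ∑' n, ENNReal.ofReal (α n * (if w n = 0 then 0 else |w n| ^ q))


def shrinkK (C₁ C₂ D q : ℝ) : ℝ :=
  C₁ ^ 2 * (4 + 2 ^ q) + (C₂ ^ q * (4 + 4 * 2 ^ (2 - q) * D) + (1 + C₁) ^ q * (4 / D + 2 ^ q))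

lemma shrinkK_pos {C₁ C₂ D q : ℝ} (hC₁ : 0 < C₁) (hC₂ : 0 < C₂) (hD : 0 < D) :
    0 < shrinkK C₁ C₂ D q := by
  unfold shrinkK
  have h1 : (0:ℝ) < 2 ^ q := Real.rpow_pos_of_pos (by norm_num) _
  have h2 : (0:ℝ) < 2 ^ (2 - q) := Real.rpow_pos_of_pos (by norm_num) _
  have h3 : (0:ℝ) < C₂ ^ q := Real.rpow_pos_of_pos hC₂ _
  have h4 : (0:ℝ) < (1 + C₁) ^ q := Real.rpow_pos_of_pos (by linarith) _
  have h5 : (0:ℝ) < 4 / D := by positivity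
  nlinarith [mul_pos h3 (by nlinarith : (0:ℝ) < 4 + 4 * 2 ^ (2-q) * D),
    mul_pos h4 (by nlinarith : (0:ℝ) < 4 / D + 2 ^ q),
    mul_pos (pow_pos hC₁ 2) (by nlinarith : (0:ℝ) < 4 + 2 ^ q)]

lemma sq_le_four_sq {x y : ℝ} (h : |x| ≤ 2 * |y|) : x ^ 2 ≤ 4 * y ^ 2 := by
  nlinarith [mul_self_le_mul_self (abs_nonneg x) h, sq_abs x, sq_abs y, abs_nonneg y]

lemma shrink_pointwise
    (ϱ : ℝ → ℝ → ℝ) (ρ : ℝ) (hρ : 1 / 2 ≤ ρ)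
    (C₁ C₂ D : ℝ) (hC₁ : 0 < C₁) (hC₂ : 0 < C₂) (hD : 0 < D)
    (hrule₁ : ∀ (x a : ℝ), 0 ≤ a → |x - ϱ x a| ≤ C₁ * min |x| a)
    (hrule₂ : ∀ (x a : ℝ), 0 < a → |x| ≤ D * a → |ϱ x a| ≤ C₂ * |x| * (|x| / a) ^ ρ)
    (q : ℝ) (hq : q = 1 / ρ)
    (α v v1 v2 w : ℝ) (hα : 0 ≤ α) (hv : v = v1 + v2)
    (hw : w = if v = 0 then 0 else ϱ v (α * |v| ^ (q - 1))) :
    (v - w) ^ 2 + α * (if w = 0 then 0 else |w| ^ q)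
      ≤ shrinkK C₁ C₂ D q * (v1 ^ 2 + α * (if v2 = 0 then 0 else |v2| ^ q)) := by
  have hρ0 : (0:ℝ) < ρ := lt_of_lt_of_le (by norm_num) hρ
  have hq0 : (0:ℝ) < q := by rw [hq]; positivity
  have hq2 : q ≤ 2 := by rw [hq, div_le_iff₀ hρ0]; linarith
  have hρq : ρ * q = 1 := by rw [hq]; field_simp
  have hKpos := shrinkK_pos (q := q) hC₁ hC₂ hD
  have h2q : (0:ℝ) < 2 ^ q := Real.rpow_pos_of_pos (by norm_num) _
  have h2q' : (0:ℝ) < 2 ^ (2 - q) := Real.rpow_pos_of_pos (by norm_num) _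
  have hC2q : (0:ℝ) < C₂ ^ q := Real.rpow_pos_of_pos hC₂ _
  have hC1q : (0:ℝ) < (1 + C₁) ^ q := Real.rpow_pos_of_pos (by linarith) _
  have hDi : (0:ℝ) < 4 / D := by positivity
  set pen2 : ℝ := α * (if v2 = 0 then 0 else |v2| ^ q) with hpen2
  have hpen2nn : 0 ≤ pen2 := by
    rw [hpen2]; apply mul_nonneg hα; split
    · exact le_refl 0
    · exact Real.rpow_nonneg (abs_nonneg _) _
  have hv1sq : 0 ≤ v1 ^ 2 := sq_nonneg v1
  clear_value pen2
  by_cases hv0 : v = 0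
  · rw [hw, if_pos hv0, if_pos rfl, hv0]
    simpa using mul_nonneg hKpos.le (by linarith : (0:ℝ) ≤ v1 ^ 2 + pen2)
  -- main case : v ≠ 0
  have hvpos : 0 < |v| := abs_pos.mpr hv0
  set a : ℝ := α * |v| ^ (q - 1) with ha_def
  have ha : 0 ≤ a := mul_nonneg hα (Real.rpow_nonneg (abs_nonneg v) _)
  have hw' : w = ϱ v a := by rw [hw, if_neg hv0]
  clear_value a
  -- rpow arithmetic facts
  have hpow1 : |v| ^ (q - 1) * |v| = |v| ^ q := by
    have h := Real.rpow_add hvpos (q - 1) 1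
    rw [show q - 1 + 1 = q by ring, Real.rpow_one] at h
    exact h.symm
  have hav : a * |v| = α * |v| ^ q := by rw [ha_def, mul_assoc, hpow1]
  have hpow2 : |v| ^ q * |v| ^ (2 - q) = v ^ 2 := by
    rw [← Real.rpow_add hvpos, show q + (2 - q) = 2 by ring,
      show (2:ℝ) = ((2:ℕ):ℝ) by norm_num, Real.rpow_natCast, sq_abs]
  have habs : |v| ≤ |v1| + |v2| := hv ▸ abs_add_le v1 v2
  -- the "v2 dominates" bound
  have hdom : ¬ (|v| ≤ 2 * |v1|) → α * |v| ^ q ≤ 2 ^ q * pen2 := by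
    intro h12
    have hv2 : |v| ≤ 2 * |v2| := by cases abs_cases v1 <;> cases abs_cases v2 <;> linarith
    have hv2ne : v2 ≠ 0 := by
      intro h; rw [h] at hv2; simp at hv2; exact hv0 hv2
    have h1 : |v| ^ q ≤ (2 * |v2|) ^ q :=
      Real.rpow_le_rpow (abs_nonneg v) hv2 hq0.le
    have h2 : (2 * |v2|) ^ q = 2 ^ q * |v2| ^ q :=
      Real.mul_rpow (by norm_num) (abs_nonneg v2)
    rw [hpen2, if_neg hv2ne]
    calc α * |v| ^ q ≤ α * (2 ^ q * |v2| ^ q) := by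
          apply mul_le_mul_of_nonneg_left _ hα; rw [← h2]; exact h1
      _ = 2 ^ q * (α * |v2| ^ q) := by ring
  -- Part A
  have hA : (v - w) ^ 2 ≤ C₁ ^ 2 * (4 + 2 ^ q) * (v1 ^ 2 + pen2) := by
    have h1 : |v - w| ≤ C₁ * min |v| a := hw' ▸ hrule₁ v a ha
    have hminnn : 0 ≤ min |v| a := le_min (abs_nonneg v) ha
    have h2 : (v - w) ^ 2 ≤ C₁ ^ 2 * (min |v| a) ^ 2 := by
      rw [← sq_abs (v - w), ← mul_pow]
      exact pow_le_pow_left₀ (abs_nonneg _) h1 2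
    by_cases h12 : |v| ≤ 2 * |v1|
    · have h6 : min |v| a ≤ 2 * |v1| := (min_le_left _ _).trans h12
      have hmin2 : (min |v| a) ^ 2 ≤ 4 * v1 ^ 2 := by
        have := mul_self_le_mul_self hminnn h6
        have h7 := sq_abs v1
        linarith [this, h7]
      calc (v - w) ^ 2 ≤ C₁ ^ 2 * (min |v| a) ^ 2 := h2
        _ ≤ C₁ ^ 2 * (4 * v1 ^ 2) := mul_le_mul_of_nonneg_left hmin2 (sq_nonneg C₁)
        _ ≤ C₁ ^ 2 * ((4 + 2 ^ q) * (v1 ^ 2 + pen2)) := by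
            apply mul_le_mul_of_nonneg_left _ (sq_nonneg C₁)
            linarith [mul_nonneg h2q.le hv1sq, mul_nonneg h2q.le hpen2nn, hv1sq, hpen2nn]
        _ = C₁ ^ 2 * (4 + 2 ^ q) * (v1 ^ 2 + pen2) := by ring
    · have h3 : (min |v| a) ^ 2 ≤ a * |v| := by
        rcases le_total |v| a with h | h
        · rw [min_eq_left h]
          linarith [mul_le_mul_of_nonneg_right h (abs_nonneg v), sq_abs v]
        · rw [min_eq_right h]
          linarith [mul_le_mul_of_nonneg_left h ha]
      have h4 : a * |v| ≤ 2 ^ q * pen2 := hav ▸ hdom h12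
      calc (v - w) ^ 2 ≤ C₁ ^ 2 * (min |v| a) ^ 2 := h2
        _ ≤ C₁ ^ 2 * (2 ^ q * pen2) := mul_le_mul_of_nonneg_left (h3.trans h4) (sq_nonneg C₁)
        _ ≤ C₁ ^ 2 * ((4 + 2 ^ q) * (v1 ^ 2 + pen2)) := by
            apply mul_le_mul_of_nonneg_left _ (sq_nonneg C₁)
            linarith [mul_nonneg h2q.le hv1sq, mul_nonneg h2q.le hpen2nn, hv1sq, hpen2nn]
        _ = C₁ ^ 2 * (4 + 2 ^ q) * (v1 ^ 2 + pen2) := by ring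
  -- Part B
  have hB : α * (if w = 0 then 0 else |w| ^ q)
      ≤ (C₂ ^ q * (4 + 4 * 2 ^ (2 - q) * D) + (1 + C₁) ^ q * (4 / D + 2 ^ q))
        * (v1 ^ 2 + pen2) := by
    have hRHSnn : 0 ≤ (C₂ ^ q * (4 + 4 * 2 ^ (2-q) * D) + (1 + C₁) ^ q * (4 / D + 2 ^ q))
        * (v1 ^ 2 + pen2) := by
      apply mul_nonneg _ (by linarith)
      linarith [mul_pos hC2q (by linarith [mul_pos h2q' hD] : (0:ℝ) < 4 + 4 * 2 ^ (2-q) * D),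
        mul_pos hC1q (by linarith : (0:ℝ) < 4 / D + 2 ^ q)]
    by_cases hw0 : w = 0
    · rw [if_pos hw0]; simpa using hRHSnn
    rw [if_neg hw0]
    by_cases hα0 : α = 0
    · rw [hα0]; simpa using hRHSnn
    have hαpos : 0 < α := lt_of_le_of_ne hα (Ne.symm hα0)
    have hapos : 0 < a := by
      rw [ha_def]; exact mul_pos hαpos (Real.rpow_pos_of_pos hvpos _)
    by_cases hcase : |v| ≤ D * a
    -- Case A : shrinkage regime
    · have hwb : |w| ≤ C₂ * |v| * (|v| / a) ^ ρ := hw' ▸ hrule₂ v a hapos hcase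
      have hstep : α * |w| ^ q ≤ C₂ ^ q * v ^ 2 := by
        have hdiv : (0:ℝ) ≤ |v| / a := div_nonneg (abs_nonneg v) ha
        have h1 : |w| ^ q ≤ (C₂ * |v| * (|v| / a) ^ ρ) ^ q :=
          Real.rpow_le_rpow (abs_nonneg w) hwb hq0.le
        have h2 : (C₂ * |v| * (|v| / a) ^ ρ) ^ q = C₂ ^ q * |v| ^ q * (|v| / a) := by
          rw [Real.mul_rpow (by positivity) (Real.rpow_nonneg hdiv ρ),
            Real.mul_rpow hC₂.le (abs_nonneg v), ← Real.rpow_mul hdiv, hρq,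
            Real.rpow_one]
        have hne : |v| ^ (q - 1) ≠ 0 := (Real.rpow_pos_of_pos hvpos _).ne'
        have hx : |v| ^ (2 - q) * |v| ^ (q - 1) = |v| := by
          rw [← Real.rpow_add hvpos, show 2 - q + (q - 1) = 1 by ring, Real.rpow_one]
        have h3 : α * (|v| / a) = |v| ^ (2 - q) := by
          rw [ha_def, ← mul_div_assoc, mul_div_mul_left _ _ hαpos.ne',
            div_eq_iff hne]
          exact hx.symm
        calc α * |w| ^ q ≤ α * (C₂ ^ q * |v| ^ q * (|v| / a)) := by
              apply mul_le_mul_of_nonneg_left _ hαpos.le; rw [← h2]; exact h1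
          _ = C₂ ^ q * |v| ^ q * (α * (|v| / a)) := by ring
          _ = C₂ ^ q * (|v| ^ q * |v| ^ (2 - q)) := by rw [h3]; ring
          _ = C₂ ^ q * v ^ 2 := by rw [hpow2]
      have hDα : |v| ^ (2 - q) ≤ D * α := by
        have h' := mul_le_mul_of_nonneg_right hcase (Real.rpow_nonneg (abs_nonneg v) (1 - q))
        have hL : |v| * |v| ^ (1 - q) = |v| ^ (2 - q) := by
          nth_rewrite 1 [← Real.rpow_one |v|]
          rw [← Real.rpow_add hvpos, show (1:ℝ) + (1 - q) = 2 - q by ring]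
        have hR : D * a * |v| ^ (1 - q) = D * α := by
          rw [ha_def, mul_assoc, mul_assoc, ← Real.rpow_add hvpos,
            show q - 1 + (1 - q) = 0 by ring, Real.rpow_zero, mul_one]
        rw [hL, hR] at h'
        exact h'
      have hvsq : v ^ 2 ≤ 4 * v1 ^ 2 + 4 * 2 ^ (2 - q) * D * pen2 := by
        by_cases h12 : |v| ≤ 2 * |v1|
        · have h13 := sq_le_four_sq h12
          have h14 : 0 ≤ 4 * 2 ^ (2-q) * D * pen2 :=
            mul_nonneg (mul_nonneg (by positivity : (0:ℝ) ≤ 4 * 2 ^ (2-q)) hD.le) hpen2nn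
          linarith
        · have hv2 : |v| ≤ 2 * |v2| := by cases abs_cases v1 <;> cases abs_cases v2 <;> linarith
          have hv2ne : v2 ≠ 0 := by intro h; rw [h] at hv2; simp at hv2; exact hv0 hv2
          have hv2pos : 0 < |v2| := abs_pos.mpr hv2ne
          have h21 : |v2| ≤ 2 * |v| := by cases abs_cases v1 <;> cases abs_cases v2 <;> cases abs_cases v <;> linarith
          have h22 : |v2| ^ (2 - q) ≤ 2 ^ (2 - q) * (D * α) := by
            calc |v2| ^ (2 - q) ≤ (2 * |v|) ^ (2 - q) :=
                  Real.rpow_le_rpow (abs_nonneg v2) h21 (by linarith)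
              _ = 2 ^ (2 - q) * |v| ^ (2 - q) := Real.mul_rpow (by norm_num) (abs_nonneg v)
              _ ≤ 2 ^ (2 - q) * (D * α) := mul_le_mul_of_nonneg_left hDα h2q'.le
          have h23 : v2 ^ 2 = |v2| ^ (2 - q) * |v2| ^ q := by
            rw [← Real.rpow_add hv2pos, show 2 - q + q = 2 by ring,
              show (2:ℝ) = ((2:ℕ):ℝ) by norm_num, Real.rpow_natCast, sq_abs]
          have h24 : v ^ 2 ≤ 4 * v2 ^ 2 := sq_le_four_sq hv2
          have hq2pos : (0:ℝ) ≤ |v2| ^ q := Real.rpow_nonneg (abs_nonneg v2) q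
          rw [hpen2, if_neg hv2ne]
          have h25 := mul_le_mul_of_nonneg_right h22 hq2pos
          linarith
      calc α * |w| ^ q ≤ C₂ ^ q * v ^ 2 := hstep
        _ ≤ C₂ ^ q * (4 * v1 ^ 2 + 4 * 2 ^ (2 - q) * D * pen2) :=
            mul_le_mul_of_nonneg_left hvsq hC2q.le
        _ ≤ (C₂ ^ q * (4 + 4 * 2 ^ (2-q) * D) + (1 + C₁) ^ q * (4 / D + 2 ^ q))
              * (v1 ^ 2 + pen2) := by
            have t1 := mul_nonneg (mul_nonneg (mul_nonneg hC2q.le h2q'.le) hD.le) hv1sq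
            have t2 := mul_nonneg hC2q.le hpen2nn
            have t3 := mul_nonneg (mul_nonneg hC1q.le hDi.le) hv1sq
            have t4 := mul_nonneg (mul_nonneg hC1q.le hDi.le) hpen2nn
            have t5 := mul_nonneg (mul_nonneg hC1q.le h2q.le) hv1sq
            have t6 := mul_nonneg (mul_nonneg hC1q.le h2q.le) hpen2nn
            linarith [t1, t2, t3, t4, t5, t6]
    -- Case B : keep regime
    · push_neg at hcase
      have h1 : |v - w| ≤ C₁ * min |v| a := hw' ▸ hrule₁ v a ha
      have hwb : |w| ≤ (1 + C₁) * |v| := by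
        have h2 : |w| ≤ |v| + |v - w| := by
          calc |w| = |v - (v - w)| := by rw [sub_sub_cancel]
            _ ≤ |v| + |v - w| := abs_sub _ _
        have h3 : min |v| a ≤ |v| := min_le_left _ _
        linarith [h2, h1, mul_le_mul_of_nonneg_left h3 hC₁.le]
      have h4 : α * |w| ^ q ≤ (1 + C₁) ^ q * (α * |v| ^ q) := by
        have h5 : |w| ^ q ≤ ((1 + C₁) * |v|) ^ q :=
          Real.rpow_le_rpow (abs_nonneg w) hwb hq0.le
        have h6 : ((1 + C₁) * |v|) ^ q = (1 + C₁) ^ q * |v| ^ q :=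
          Real.mul_rpow (by linarith) (abs_nonneg v)
        calc α * |w| ^ q ≤ α * ((1 + C₁) ^ q * |v| ^ q) := by
              apply mul_le_mul_of_nonneg_left _ hα; rw [← h6]; exact h5
          _ = (1 + C₁) ^ q * (α * |v| ^ q) := by ring
      have h7 : α * |v| ^ q ≤ 4 / D * v1 ^ 2 + 2 ^ q * pen2 := by
        by_cases h12 : |v| ≤ 2 * |v1|
        · have h8 : D * a * |v| ≤ |v| * |v| :=
            mul_le_mul_of_nonneg_right hcase.le (abs_nonneg v)
          have h9 : |v| * |v| ≤ 4 * v1 ^ 2 := by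
            have := sq_le_four_sq h12
            linarith [this, sq_abs v]
          have h10 : a * |v| ≤ 4 / D * v1 ^ 2 := by
            rw [div_mul_eq_mul_div, le_div_iff₀ hD]
            linarith [h8, h9]
          rw [← hav]
          linarith [h10, mul_nonneg h2q.le hpen2nn]
        · have := hdom h12
          linarith [this, mul_nonneg hDi.le hv1sq]
      calc α * |w| ^ q ≤ (1 + C₁) ^ q * (α * |v| ^ q) := h4
        _ ≤ (1 + C₁) ^ q * (4 / D * v1 ^ 2 + 2 ^ q * pen2) :=
            mul_le_mul_of_nonneg_left h7 hC1q.le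
        _ ≤ (C₂ ^ q * (4 + 4 * 2 ^ (2-q) * D) + (1 + C₁) ^ q * (4 / D + 2 ^ q))
              * (v1 ^ 2 + pen2) := by
            have u1 := mul_nonneg hC2q.le hv1sq
            have u2 := mul_nonneg hC2q.le hpen2nn
            have u3 := mul_nonneg (mul_nonneg (mul_nonneg hC2q.le h2q'.le) hD.le) hv1sq
            have u4 := mul_nonneg (mul_nonneg (mul_nonneg hC2q.le h2q'.le) hD.le) hpen2nn
            have u5 := mul_nonneg (mul_nonneg hC1q.le hDi.le) hpen2nn
            have u6 := mul_nonneg (mul_nonneg hC1q.le h2q.le) hv1sq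
            linarith [u1, u2, u3, u4, u5, u6]
  -- combine
  unfold shrinkK
  linarith [hA, hB]

lemma rho_abs_le (ϱ : ℝ → ℝ → ℝ) (C₁ : ℝ) (hC₁ : 0 ≤ C₁)
    (hrule₁ : ∀ (x a : ℝ), 0 ≤ a → |x - ϱ x a| ≤ C₁ * min |x| a)
    (x a : ℝ) (ha : 0 ≤ a) : |ϱ x a| ≤ (1 + C₁) * |x| := by
  have h1 := hrule₁ x a ha
  have h2 : min |x| a ≤ |x| := min_le_left _ _
  have h3 : |ϱ x a| ≤ |x| + |x - ϱ x a| := by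
    calc |ϱ x a| = |x - (x - ϱ x a)| := by rw [sub_sub_cancel]
      _ ≤ |x| + |x - ϱ x a| := abs_sub _ _
  have h4 := mul_le_mul_of_nonneg_left h2 hC₁
  linarith


lemma lp2_ofReal_norm_sq (x : lp (fun _ : ℕ => ℝ) 2) :
    ENNReal.ofReal (‖x‖ ^ 2)
      = ∑' n, ENNReal.ofReal (((x : ∀ _ : ℕ, ℝ) n) ^ 2) := by
  have hp : (0:ℝ) < (2 : ℝ≥0∞).toReal := by norm_num
  have h1 := lp.norm_rpow_eq_tsum hp x
  have ht : ((2:ℝ≥0∞)).toReal = (2:ℝ) := by norm_num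
  rw [ht] at h1
  have h2 : ∀ y : ℝ, y ^ (2:ℝ) = y ^ 2 ∨ True := fun y => Or.inr trivial
  have h3 : ‖x‖ ^ (2:ℕ) = ∑' n, ((x : ∀ _ : ℕ, ℝ) n) ^ (2:ℕ) := by
    have hxn : ∀ n, ‖(x : ∀ _ : ℕ, ℝ) n‖ ^ (2:ℝ) = ((x : ∀ _ : ℕ, ℝ) n) ^ (2:ℕ) := by
      intro n
      rw [Real.norm_eq_abs, show ((2:ℝ)) = ((2:ℕ):ℝ) by norm_num, Real.rpow_natCast, sq_abs]
    have hx : ‖x‖ ^ (2:ℝ) = ‖x‖ ^ (2:ℕ) := by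
      rw [show ((2:ℝ)) = ((2:ℕ):ℝ) by norm_num, Real.rpow_natCast]
    simp only [hxn, hx] at h1
    exact h1
  rw [h3]
  have hsum : Summable fun n => ((x : ∀ _ : ℕ, ℝ) n) ^ (2:ℕ) := by
    have hs := (lp.memℓp x).summable hp
    rw [ht] at hs
    apply hs.congr
    intro n
    rw [Real.norm_eq_abs, show ((2:ℝ)) = ((2:ℕ):ℝ) by norm_num, Real.rpow_natCast, sq_abs]
  exact ENNReal.ofReal_tsum_of_nonneg (fun n => sq_nonneg _) hsum

lemma memℓp_two_of_le {g : ℕ → ℝ} (x : lp (fun _ : ℕ => ℝ) 2) (c : ℝ)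
    (hb : ∀ n, |g n| ≤ c * |(x : ∀ _ : ℕ, ℝ) n|) : Memℓp g 2 := by
  apply memℓp_gen
  have hp : (0:ℝ) < (2 : ℝ≥0∞).toReal := by norm_num
  have hs := (lp.memℓp x).summable hp
  refine Summable.of_nonneg_of_le
    (fun n => Real.rpow_nonneg (norm_nonneg _) _) (fun n => ?_)
    (hs.mul_left (|c| ^ ((2:ℝ≥0∞)).toReal))
  rw [← Real.mul_rpow (abs_nonneg c) (norm_nonneg _)]
  apply Real.rpow_le_rpow (norm_nonneg _) ?_ ENNReal.toReal_nonneg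
  have h1 : |g n| ≤ c * |(x : ∀ _ : ℕ, ℝ) n| := hb n
  have h2 : c * |(x : ∀ _ : ℕ, ℝ) n| ≤ |c| * |(x : ∀ _ : ℕ, ℝ) n| :=
    mul_le_mul_of_nonneg_right (le_abs_self c) (abs_nonneg _)
  calc ‖g n‖ = |g n| := Real.norm_eq_abs _
    _ ≤ |c| * |(x : ∀ _ : ℕ, ℝ) n| := h1.trans h2
    _ = |c| * ‖(x : ∀ _ : ℕ, ℝ) n‖ := by rw [Real.norm_eq_abs]

theorem shrinkage_minimizes_sparse_approximation
    {H : Type*}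
    [NormedAddCommGroup H] [InnerProductSpace ℝ H] [CompleteSpace H]
    [TopologicalSpace.SeparableSpace H]
    -- a shrinkage rule ϱ with exponent ρ ∈ [1/2, ∞)
    (ϱ : ℝ → ℝ → ℝ) (ρ : ℝ) (hρ : 1 / 2 ≤ ρ)
    (C₁ C₂ D : ℝ) (hC₁ : 0 < C₁) (hC₂ : 0 < C₂) (hD : 0 < D)
    (hrule₁ : ∀ (x a : ℝ), 0 ≤ a → |x - ϱ x a| ≤ C₁ * min |x| a)
    (hrule₂ : ∀ (x a : ℝ), 0 < a → |x| ≤ D * a → |ϱ x a| ≤ C₂ * |x| * (|x| / a) ^ ρ)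
    (q : ℝ) (hq : q = 1 / ρ)
    -- a bi-frame {f n}, {ftil n} for H
    (f ftil : ℕ → H) (A B A' B' : ℝ) (hA : 0 < A) (hAB : A ≤ B) (hA' : 0 < A') (hAB' : A' ≤ B')
    (hframe : ∀ g : H,
      A * ‖g‖ ^ 2 ≤ ∑' n, ⟪g, f n⟫ ^ 2 ∧ ∑' n, ⟪g, f n⟫ ^ 2 ≤ B * ‖g‖ ^ 2)
    (hframe' : ∀ g : H,
      A' * ‖g‖ ^ 2 ≤ ∑' n, ⟪g, ftil n⟫ ^ 2 ∧ ∑' n, ⟪g, ftil n⟫ ^ 2 ≤ B' * ‖g‖ ^ 2)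
    -- synthesis operator F of {f n} and analysis operator F̃* of the dual frame {ftil n}
    (F : lp (fun _ : ℕ => ℝ) 2 →L[ℝ] H)
    (hF : ∀ c : lp (fun _ : ℕ => ℝ) 2, HasSum (fun n => (c : ∀ _ : ℕ, ℝ) n • f n) (F c))
    (Fta : H →L[ℝ] lp (fun _ : ℕ => ℝ) 2)
    (hFta : ∀ (g : H) (n : ℕ), (Fta g : ∀ _ : ℕ, ℝ) n = ⟪g, ftil n⟫)
    (hbi : ∀ g : H, F (Fta g) = g)
    -- nonnegative weights, and boundedness of F̃* F on ℓ_q^{(α_n)}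
    (α : ℕ → ℝ) (hα : ∀ n, 0 ≤ α n)
    (M : ℝ)
    (hM : ∀ ω : lp (fun _ : ℕ => ℝ) 2,
      wpen α q (fun n => (Fta (F ω) : ∀ _ : ℕ, ℝ) n)
        ≤ ENNReal.ofReal M * wpen α q (fun n => (ω : ∀ _ : ℕ, ℝ) n)) :
    ∃ C > (0 : ℝ), ∀ h : H,
      ∃ what : lp (fun _ : ℕ => ℝ) 2,
        -- ω̂_n = ϱ(v_n, α_n |v_n|^(q−1)) with v = F̃* h (and ω̂_n = 0 when v_n = 0)
        (∀ n : ℕ, (what : ∀ _ : ℕ, ℝ) n =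
          if (Fta h : ∀ _ : ℕ, ℝ) n = 0 then 0
          else ϱ ((Fta h : ∀ _ : ℕ, ℝ) n) (α n * |(Fta h : ∀ _ : ℕ, ℝ) n| ^ (q - 1))) ∧
        -- ω̂ minimizes K_q(h, ·) up to the constant factor C
        ∀ ω : lp (fun _ : ℕ => ℝ) 2,
          ENNReal.ofReal (‖h - F what‖ ^ 2) + wpen α q (fun n => (what : ∀ _ : ℕ, ℝ) n)
            ≤ ENNReal.ofReal C *
              (ENNReal.ofReal (‖h - F ω‖ ^ 2) + wpen α q (fun n => (ω : ∀ _ : ℕ, ℝ) n)) := by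
  have hKpos := shrinkK_pos (q := q) hC₁ hC₂ hD
  set K : ℝ := shrinkK C₁ C₂ D q with hK
  set c0 : ℝ := ‖F‖ ^ 2 + 1 with hc0
  set T : ℝ := ‖Fta‖ ^ 2 + |M| + 1 with hT
  have hc0pos : (0:ℝ) < c0 := by positivity
  have hTpos : (0:ℝ) < T := by positivity
  refine ⟨c0 * K * T, by positivity, fun h => ?_⟩
  classical
  set vv : lp (fun _ : ℕ => ℝ) 2 := Fta h with hvv
  set wfun : ℕ → ℝ := fun n =>
    if (vv : ∀ _ : ℕ, ℝ) n = 0 then 0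
    else ϱ ((vv : ∀ _ : ℕ, ℝ) n) (α n * |(vv : ∀ _ : ℕ, ℝ) n| ^ (q - 1)) with hwfun
  have hbnd : ∀ n, |wfun n| ≤ (1 + C₁) * |(vv : ∀ _ : ℕ, ℝ) n| := by
    intro n
    by_cases h0 : (vv : ∀ _ : ℕ, ℝ) n = 0
    · rw [hwfun]
      simp [h0]
    · rw [hwfun]
      simp only [if_neg h0]
      exact rho_abs_le ϱ C₁ hC₁.le hrule₁ _ _
        (mul_nonneg (hα n) (Real.rpow_nonneg (abs_nonneg _) _))
  have hmem : Memℓp wfun 2 := memℓp_two_of_le vv (1 + C₁) hbnd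
  refine ⟨⟨wfun, hmem⟩, fun n => rfl, fun ω => ?_⟩
  set what : lp (fun _ : ℕ => ℝ) 2 := (⟨wfun, hmem⟩ : lp (fun _ : ℕ => ℝ) 2) with hwhat
  set u : H := h - F ω with hu
  set v1 : lp (fun _ : ℕ => ℝ) 2 := Fta u with hv1
  set v2 : lp (fun _ : ℕ => ℝ) 2 := Fta (F ω) with hv2
  have hsplit : ∀ n, (vv : ∀ _ : ℕ, ℝ) n = (v1 : ∀ _ : ℕ, ℝ) n + (v2 : ∀ _ : ℕ, ℝ) n := by
    intro n
    have e : vv = v1 + v2 := by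
      rw [hvv, hv1, hv2, ← map_add]
      congr 1
      rw [hu]
      abel
    rw [e, lp.coeFn_add, Pi.add_apply]
  -- pointwise master inequality, in ℝ≥0∞
  have hpw : ∀ n,
      ENNReal.ofReal (((vv : ∀ _ : ℕ, ℝ) n - wfun n) ^ 2)
        + ENNReal.ofReal (α n * (if wfun n = 0 then 0 else |wfun n| ^ q))
      ≤ ENNReal.ofReal K *
          (ENNReal.ofReal (((v1 : ∀ _ : ℕ, ℝ) n) ^ 2)
            + ENNReal.ofReal (α n * (if (v2 : ∀ _ : ℕ, ℝ) n = 0 then 0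
                else |(v2 : ∀ _ : ℕ, ℝ) n| ^ q))) := by
    intro n
    have hreal := shrink_pointwise ϱ ρ hρ C₁ C₂ D hC₁ hC₂ hD hrule₁ hrule₂ q hq
      (α n) ((vv : ∀ _ : ℕ, ℝ) n) ((v1 : ∀ _ : ℕ, ℝ) n) ((v2 : ∀ _ : ℕ, ℝ) n) (wfun n)
      (hα n) (hsplit n) (by rw [hwfun])
    have l1 : 0 ≤ ((vv : ∀ _ : ℕ, ℝ) n - wfun n) ^ 2 := sq_nonneg _
    have l2 : 0 ≤ α n * (if wfun n = 0 then 0 else |wfun n| ^ q) := by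
      apply mul_nonneg (hα n); split
      · exact le_refl 0
      · exact Real.rpow_nonneg (abs_nonneg _) _
    have l3 : 0 ≤ ((v1 : ∀ _ : ℕ, ℝ) n) ^ 2 := sq_nonneg _
    have l4 : 0 ≤ α n * (if (v2 : ∀ _ : ℕ, ℝ) n = 0 then 0 else |(v2 : ∀ _ : ℕ, ℝ) n| ^ q) := by
      apply mul_nonneg (hα n); split
      · exact le_refl 0
      · exact Real.rpow_nonneg (abs_nonneg _) _
    calc ENNReal.ofReal (((vv : ∀ _ : ℕ, ℝ) n - wfun n) ^ 2)
          + ENNReal.ofReal (α n * (if wfun n = 0 then 0 else |wfun n| ^ q))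
        = ENNReal.ofReal (((vv : ∀ _ : ℕ, ℝ) n - wfun n) ^ 2
            + α n * (if wfun n = 0 then 0 else |wfun n| ^ q)) :=
          (ENNReal.ofReal_add l1 l2).symm
      _ ≤ ENNReal.ofReal (K * (((v1 : ∀ _ : ℕ, ℝ) n) ^ 2
            + α n * (if (v2 : ∀ _ : ℕ, ℝ) n = 0 then 0 else |(v2 : ∀ _ : ℕ, ℝ) n| ^ q))) :=
          ENNReal.ofReal_le_ofReal hreal
      _ = ENNReal.ofReal K * ENNReal.ofReal (((v1 : ∀ _ : ℕ, ℝ) n) ^ 2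
            + α n * (if (v2 : ∀ _ : ℕ, ℝ) n = 0 then 0 else |(v2 : ∀ _ : ℕ, ℝ) n| ^ q)) :=
          ENNReal.ofReal_mul hKpos.le
      _ = _ := by rw [ENNReal.ofReal_add l3 l4]
  -- summed inequality
  have hsum : ENNReal.ofReal (‖vv - what‖ ^ 2) + wpen α q wfun
      ≤ ENNReal.ofReal K *
          (ENNReal.ofReal (‖v1‖ ^ 2) + wpen α q (fun n => (v2 : ∀ _ : ℕ, ℝ) n)) := by
    rw [lp2_ofReal_norm_sq (vv - what), lp2_ofReal_norm_sq v1]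
    unfold wpen
    rw [← ENNReal.tsum_add, ← ENNReal.tsum_add, ← ENNReal.tsum_mul_left]
    apply ENNReal.tsum_le_tsum
    intro n
    have hc : ((vv - what : lp (fun _ : ℕ => ℝ) 2) : ∀ _ : ℕ, ℝ) n
        = (vv : ∀ _ : ℕ, ℝ) n - wfun n := by
      rw [lp.coeFn_sub, Pi.sub_apply]
    rw [hc]
    exact hpw n
  -- operator norm bounds
  have hFw : h - F what = F (vv - what) := by
    rw [map_sub, hvv, hbi]
  have hF2 : ENNReal.ofReal (‖h - F what‖ ^ 2)
      ≤ ENNReal.ofReal c0 * ENNReal.ofReal (‖vv - what‖ ^ 2) := by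
    rw [← ENNReal.ofReal_mul hc0pos.le]
    apply ENNReal.ofReal_le_ofReal
    rw [hFw, hc0]
    have h1 := F.le_opNorm (vv - what)
    have h2 := mul_self_le_mul_self (norm_nonneg (F (vv - what))) h1
    nlinarith [norm_nonneg (vv - what), sq_nonneg ‖vv - what‖]
  have hFta2 : ENNReal.ofReal (‖v1‖ ^ 2)
      ≤ ENNReal.ofReal T * ENNReal.ofReal (‖u‖ ^ 2) := by
    rw [← ENNReal.ofReal_mul hTpos.le]
    apply ENNReal.ofReal_le_ofReal
    rw [hv1, hT]
    have h1 := Fta.le_opNorm u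
    have h2 := mul_self_le_mul_self (norm_nonneg (Fta u)) h1
    nlinarith [norm_nonneg u, sq_nonneg ‖u‖, abs_nonneg M]
  have hMT : wpen α q (fun n => (v2 : ∀ _ : ℕ, ℝ) n)
      ≤ ENNReal.ofReal T * wpen α q (fun n => (ω : ∀ _ : ℕ, ℝ) n) := by
    have step1 : wpen α q (fun n => (v2 : ∀ _ : ℕ, ℝ) n)
        ≤ ENNReal.ofReal M * wpen α q (fun n => (ω : ∀ _ : ℕ, ℝ) n) := by
      rw [hv2]; exact hM ω
    have step2 : ENNReal.ofReal M ≤ ENNReal.ofReal T := by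
      apply ENNReal.ofReal_le_ofReal
      rw [hT]
      nlinarith [le_abs_self M, sq_nonneg ‖Fta‖]
    exact step1.trans (mul_le_mul_left step2 _)
  -- assemble
  have hone : (1:ℝ≥0∞) ≤ ENNReal.ofReal c0 := by
    rw [ENNReal.one_le_ofReal]
    rw [hc0]
    nlinarith [sq_nonneg ‖F‖]
  have hwp : wpen α q (fun n => (what : ∀ _ : ℕ, ℝ) n) = wpen α q wfun := rfl
  rw [hwp]
  calc ENNReal.ofReal (‖h - F what‖ ^ 2) + wpen α q wfun
      ≤ ENNReal.ofReal c0 * ENNReal.ofReal (‖vv - what‖ ^ 2)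
        + ENNReal.ofReal c0 * wpen α q wfun := by
        apply add_le_add hF2
        calc wpen α q wfun = 1 * wpen α q wfun := (one_mul _).symm
          _ ≤ ENNReal.ofReal c0 * wpen α q wfun := mul_le_mul_left hone _
    _ = ENNReal.ofReal c0 * (ENNReal.ofReal (‖vv - what‖ ^ 2) + wpen α q wfun) :=
        (mul_add _ _ _).symm
    _ ≤ ENNReal.ofReal c0 * (ENNReal.ofReal K *
          (ENNReal.ofReal (‖v1‖ ^ 2) + wpen α q (fun n => (v2 : ∀ _ : ℕ, ℝ) n))) :=
        mul_le_mul_right hsum _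
    _ ≤ ENNReal.ofReal c0 * (ENNReal.ofReal K *
          (ENNReal.ofReal T * ENNReal.ofReal (‖u‖ ^ 2)
            + ENNReal.ofReal T * wpen α q (fun n => (ω : ∀ _ : ℕ, ℝ) n))) :=
        mul_le_mul_right (mul_le_mul_right (add_le_add hFta2 hMT) _) _
    _ = ENNReal.ofReal (c0 * K * T) *
          (ENNReal.ofReal (‖u‖ ^ 2) + wpen α q (fun n => (ω : ∀ _ : ℕ, ℝ) n)) := by
        rw [ENNReal.ofReal_mul (by positivity), ENNReal.ofReal_mul hc0pos.le]
        ring
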